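/- arXiv:math/0411557 — 5 statements merged into one kernel-verified Lean document; each statement's English description precedes it below -/
import Mathlib

section
/- For every natural number n ≥ 2, the number of rank-2 matroids on a fixed n-element ground set equals b(n+1) − 2^n, where b(k) denotes the k-th Bell number. -/
/-- The `k`-th Bell number: the number of equivalence relations (partitions) of a
`k`-element set. -/
noncomputable def bellNum (k : ℕ) : ℕ := Nat.card (Setoid (Fin k))

/-!
Adjoin a new point `none` to the ground set and glue all loops to it. A matroid of rank at most
two on `α` is determined by its loops and its parallel classes, i.e. by this partition of
`Option α`, and every partition of `Option α` arises, as the truncation to rank two of the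
partition matroid it defines. The rank is exactly two iff there are at least two classes besides
the class of `none`, that is, at least three classes. A partition with at most two classes is
determined by the class of `none`, hence by a subset of `α`: there are `2 ^ |α|` of them.
-/

open Set

variable {α β γ : Type*}

def Equiv.setoidCongr (e : β ≃ γ) : Setoid β ≃ Setoid γ where
  toFun := Setoid.comap e.symm
  invFun := Setoid.comap e
  left_inv s := Setoid.ext fun a b => by simp [Setoid.comap_rel]
  right_inv s := Setoid.ext fun a b => by simp [Setoid.comap_rel]

instance [Finite β] : Finite (Setoid β) :=
  Finite.of_injective (fun s : Setoid β => (s : β → β → Prop)) fun _ _ h =>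
    Setoid.ext fun a b => iff_of_eq (congrFun₂ h a b)

def setsContainingNoneEquiv : {T : Set (Option α) // none ∈ T} ≃ Set α where
  toFun T := some ⁻¹' T
  invFun S := ⟨insert none (some '' S), mem_insert _ _⟩
  left_inv T := Subtype.ext <| Set.ext fun o => by cases o <;> simp [T.2]
  right_inv S := Set.ext fun x => by simp

namespace Setoid

def AtMostTwoClasses (s : Setoid β) : Prop := ∀ a b c, s a b ∨ s b c ∨ s a c

variable {s : Setoid β}

lemma atMostTwoClasses_iff (c : β) :
    AtMostTwoClasses s ↔ ∀ a b, ¬ s a c → ¬ s b c → s a b := by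
  refine ⟨fun h a b ha hb => ?_, fun h a b d => ?_⟩
  · rcases h a b c with h | h | h <;> tauto
  · by_cases ha : s a c <;> by_cases hb : s b c <;> by_cases hd : s d c
    all_goals grind [s.iseqv.symm, s.iseqv.trans]

lemma AtMostTwoClasses.eq_ker (hs : AtMostTwoClasses s) (c : β) : s = ker (s · c) := by
  refine Setoid.ext fun a b => ?_
  rw [ker_def, eq_iff_iff]
  refine ⟨fun hab => ⟨s.iseqv.trans (s.iseqv.symm hab), s.iseqv.trans hab⟩, fun h => ?_⟩
  by_cases ha : s a c
  · exact s.iseqv.trans ha (s.iseqv.symm (h.1 ha))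
  · exact (atMostTwoClasses_iff c).1 hs a b ha (mt h.2 ha)

def atMostTwoClassesEquiv (c : β) :
    {s : Setoid β // AtMostTwoClasses s} ≃ {T : Set β // c ∈ T} where
  toFun s := ⟨{a | s.1 a c}, s.1.iseqv.refl c⟩
  invFun T := ⟨ker (· ∈ T.1), fun a b d => by simp only [ker_def, eq_iff_iff]; tauto⟩
  left_inv s := Subtype.ext (s.2.eq_ker c).symm
  right_inv T := Subtype.ext <| Set.ext fun a => by simp [ker_def, T.2]

lemma atMostTwoClasses_option_iff {s : Setoid (Option α)} : s.AtMostTwoClasses ↔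
    ∀ x y : α, ¬ s (some x) none → ¬ s (some y) none → s (some x) (some y) := by
  refine (atMostTwoClasses_iff none).trans ⟨fun h x y => h _ _, fun h a b ha hb => ?_⟩
  rcases a with _ | x
  · exact absurd (s.iseqv.refl _) ha
  rcases b with _ | y
  · exact absurd (s.iseqv.refl _) hb
  exact h x y ha hb

lemma ext_option {s t : Setoid (Option α)} (hnone : ∀ x, s (some x) none ↔ t (some x) none)
    (hsome : ∀ x y, ¬ s (some x) none → ¬ s (some y) none →
      (s (some x) (some y) ↔ t (some x) (some y))) : s = t := by
  refine Setoid.ext ?_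
  rintro (_ | x) (_ | y)
  · exact iff_of_true (s.iseqv.refl _) (t.iseqv.refl _)
  · rw [s.comm', t.comm', hnone]
  · exact hnone x
  · grind [s.iseqv.symm, s.iseqv.trans, t.iseqv.symm, t.iseqv.trans]

end Setoid

namespace Matroid

section Truncation

variable {M : Matroid α} [M.Finite] {k : ℕ} {I J : Set α}

lemma Indep.augment_of_ncard_lt (hI : M.Indep I) (hJ : M.Indep J) (h : I.ncard < J.ncard) :
    ∃ e ∈ J \ I, M.Indep (insert e I) :=
  hI.augment hJ <| by
    rwa [← (M.ground_finite.subset hI.subset_ground).cast_ncard_eq,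
      ← (M.ground_finite.subset hJ.subset_ground).cast_ncard_eq, Nat.cast_lt]

variable (M k) in
def truncateTo : Matroid α :=
  (IndepMatroid.ofFinite M.ground_finite (fun I => M.Indep I ∧ I.ncard ≤ k)
    ⟨M.empty_indep, by simp⟩
    (fun _ J hJ hIJ => ⟨hJ.1.subset hIJ,
      (ncard_le_ncard hIJ (M.ground_finite.subset hJ.1.subset_ground)).trans hJ.2⟩)
    (fun I J hI hJ hlt => by
      obtain ⟨e, ⟨heJ, heI⟩, he⟩ := hI.1.augment_of_ncard_lt hJ.1 hlt
      refine ⟨e, heJ, heI, he, ?_⟩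
      rw [ncard_insert_of_notMem heI (M.ground_finite.subset hI.1.subset_ground)]
      omega)
    (fun _ hI => hI.1.subset_ground)).matroid

@[simp] lemma truncateTo_ground : (M.truncateTo k).E = M.E := rfl

@[simp] lemma truncateTo_indep_iff : (M.truncateTo k).Indep I ↔ M.Indep I ∧ I.ncard ≤ k := by
  simp [truncateTo]

lemma forall_isBase_ncard_eq_iff (hM : ∀ I, M.Indep I → I.ncard ≤ k) :
    (∀ B, M.IsBase B → B.ncard = k) ↔ ∃ I, M.Indep I ∧ I.ncard = k := by
  refine ⟨fun h => ?_, fun ⟨I, hI, hIk⟩ B hB => ?_⟩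
  · obtain ⟨B, hB⟩ := M.exists_isBase
    exact ⟨B, hB.indep, h B hB⟩
  obtain ⟨B', hB', hIB'⟩ := hI.exists_isBase_superset
  have := ncard_le_ncard hIB' (M.ground_finite.subset hB'.subset_ground)
  rw [hB.ncard_eq_ncard_of_isBase hB']
  exact le_antisymm (hM B' hB'.indep) (hIk ▸ this)

lemma Indep.ncard_le_of_forall_isBase_ncard (hM : ∀ B, M.IsBase B → B.ncard = k)
    (hI : M.Indep I) : I.ncard ≤ k := by
  obtain ⟨B, hB, hIB⟩ := hI.exists_isBase_superset
  exact hM B hB ▸ ncard_le_ncard hIB (M.ground_finite.subset hB.subset_ground)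

end Truncation

/-- The class of `none` consists of loops, every other class is a parallel class. -/
def partitionMatroid (s : Setoid (Option α)) : Matroid α :=
  (uniqueBaseOn {Quotient.mk s none}ᶜ univ).comap fun x => Quotient.mk s (some x)

@[simp] lemma partitionMatroid_ground (s : Setoid (Option α)) :
    (partitionMatroid s).E = univ := rfl

lemma partitionMatroid_indep_iff {s : Setoid (Option α)} {I : Set α} :
    (partitionMatroid s).Indep I ↔
      (∀ x ∈ I, ¬ s (some x) none) ∧ I.Pairwise fun x y => ¬ s (some x) (some y) := by
  simp [partitionMatroid, injOn_iff_pairwise_ne, subset_def, Quotient.eq]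

/-- Parallelism, with the loops put into the class of `none`. -/
def closureSetoid (M : Matroid α) : Setoid (Option α) :=
  Setoid.ker fun o => M.closure (o.elim ∅ singleton)

section closureSetoid

variable {M : Matroid α} {x y : α} {I : Set α}

lemma closureSetoid_some_none_iff : M.closureSetoid (some x) none ↔ ¬ M.IsNonloop x := by
  rw [closureSetoid, Setoid.ker_def, not_isNonloop_iff_closure]
  exact Iff.rfl

lemma closureSetoid_some_some_iff (hx : M.IsNonloop x) (hy : M.IsNonloop y) :
    M.closureSetoid (some x) (some y) ↔ x = y ∨ ¬ M.Indep {x, y} :=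
  hx.closure_eq_closure_iff_eq_or_dep hy

lemma indep_iff_partitionMatroid_closureSetoid_indep (hfin : I.Finite) (hI : I.ncard ≤ 2) :
    M.Indep I ↔ (partitionMatroid M.closureSetoid).Indep I := by
  rw [partitionMatroid_indep_iff]
  simp only [closureSetoid_some_none_iff, not_not]
  interval_cases h : I.ncard
  · obtain rfl := (ncard_eq_zero hfin).1 h
    simp
  · obtain ⟨a, rfl⟩ := ncard_eq_one.1 h
    simp
  · obtain ⟨a, b, hab, rfl⟩ := ncard_eq_two.1 h
    simp only [mem_insert_iff, mem_singleton_iff, forall_eq_or_imp, forall_eq, pairwise_pair,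
      M.closureSetoid.comm' (x := some b), and_self]
    refine ⟨fun hpair => ?_, fun ⟨⟨ha, hb⟩, hsep⟩ => ?_⟩
    · have ha := hpair.isNonloop_of_mem (mem_insert a _)
      have hb := hpair.isNonloop_of_mem (mem_insert_of_mem a rfl)
      exact ⟨⟨ha, hb⟩, fun _ => by rw [closureSetoid_some_some_iff ha hb]; tauto⟩
    · have := hsep hab
      rw [closureSetoid_some_some_iff ha hb] at this
      tauto

end closureSetoid

section RankTwo

variable [Finite α]

lemma truncateTo_two_partitionMatroid_closureSetoid {M : Matroid α} (hE : M.E = univ)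
    (hM : ∀ I, M.Indep I → I.ncard ≤ 2) :
    (partitionMatroid M.closureSetoid).truncateTo 2 = M := by
  refine ext_indep (by simp [hE]) fun I _ => ?_
  rw [truncateTo_indep_iff]
  refine ⟨fun ⟨hI, h2⟩ => (indep_iff_partitionMatroid_closureSetoid_indep I.toFinite h2).2 hI,
    fun hI => ⟨(indep_iff_partitionMatroid_closureSetoid_indep I.toFinite (hM I hI)).1 hI,
      hM I hI⟩⟩

lemma closureSetoid_truncateTo_two_partitionMatroid (s : Setoid (Option α)) :
    ((partitionMatroid s).truncateTo 2).closureSetoid = s := by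
  have hnonloop (x : α) :
      ((partitionMatroid s).truncateTo 2).IsNonloop x ↔ ¬ s (some x) none := by
    simp [← indep_singleton, partitionMatroid_indep_iff]
  refine (Setoid.ext_option (fun x => ?_) (fun x y hx hy => ?_)).symm
  · rw [closureSetoid_some_none_iff, hnonloop, not_not]
  rw [closureSetoid_some_some_iff ((hnonloop x).2 hx) ((hnonloop y).2 hy)]
  rcases eq_or_ne x y with rfl | hxy
  · exact iff_of_true (s.iseqv.refl _) (Or.inl rfl)
  simp [partitionMatroid_indep_iff, pairwise_pair, hxy, hx, hy, ncard_pair hxy,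
    s.comm' (x := some y)]

lemma isBase_ncard_truncateTo_two_partitionMatroid_iff (s : Setoid (Option α)) :
    (∀ B, ((partitionMatroid s).truncateTo 2).IsBase B → B.ncard = 2) ↔
      ¬ s.AtMostTwoClasses := by
  rw [forall_isBase_ncard_eq_iff fun I hI => (truncateTo_indep_iff.1 hI).2]
  simp only [Setoid.atMostTwoClasses_option_iff, truncateTo_indep_iff, partitionMatroid_indep_iff]
  push Not
  constructor
  · rintro ⟨I, ⟨⟨hI, hIp⟩, -⟩, h2⟩
    obtain ⟨a, b, hab, rfl⟩ := ncard_eq_two.1 h2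
    exact ⟨a, b, hI a (by simp), hI b (by simp), hIp (by simp) (by simp) hab⟩
  · rintro ⟨a, b, ha, hb, hab⟩
    have hne : a ≠ b := by rintro rfl; exact hab (s.iseqv.refl _)
    refine ⟨{a, b}, ⟨⟨?_, ?_⟩, (ncard_pair hne).le⟩, ncard_pair hne⟩
    · rintro x (rfl | rfl) <;> assumption
    · exact pairwise_pair.2 fun _ => ⟨hab, fun h => hab (s.iseqv.symm h)⟩

noncomputable def rankTwoEquiv :
    {M : Matroid α // M.E = univ ∧ ∀ B, M.IsBase B → B.ncard = 2} ≃
      {s : Setoid (Option α) // ¬ s.AtMostTwoClasses} where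
  toFun M := ⟨M.1.closureSetoid, by
    rw [← isBase_ncard_truncateTo_two_partitionMatroid_iff,
      truncateTo_two_partitionMatroid_closureSetoid M.2.1
        fun I hI => hI.ncard_le_of_forall_isBase_ncard M.2.2]
    exact M.2.2⟩
  invFun s := ⟨(partitionMatroid s.1).truncateTo 2, rfl,
    (isBase_ncard_truncateTo_two_partitionMatroid_iff s.1).2 s.2⟩
  left_inv M := Subtype.ext <| truncateTo_two_partitionMatroid_closureSetoid M.2.1
    fun I hI => hI.ncard_le_of_forall_isBase_ncard M.2.2
  right_inv s := Subtype.ext (closureSetoid_truncateTo_two_partitionMatroid s.1)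

end RankTwo

lemma card_rankTwo_eq [Fintype α] :
    Nat.card {M : Matroid α // M.E = univ ∧ ∀ B, M.IsBase B → B.ncard = 2} =
      Nat.card (Setoid (Option α)) - 2 ^ Fintype.card α := by
  classical
  have hsplit := Nat.card_congr (Equiv.sumCompl fun s : Setoid (Option α) => s.AtMostTwoClasses)
  have hsmall : Nat.card {s : Setoid (Option α) // s.AtMostTwoClasses} = 2 ^ Fintype.card α := by
    rw [Nat.card_congr ((Setoid.atMostTwoClassesEquiv none).trans setsContainingNoneEquiv),
      Nat.card_eq_fintype_card, Fintype.card_set]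
  rw [Nat.card_sum] at hsplit
  rw [Nat.card_congr rankTwoEquiv]
  omega

end Matroid

theorem rank_two_matroid_count_general (n : ℕ) :
    Nat.card {M : Matroid (Fin n) // M.E = Set.univ ∧ ∀ B, M.IsBase B → B.ncard = 2} =
      bellNum (n + 1) - 2 ^ n := by
  rw [Matroid.card_rankTwo_eq, Fintype.card_fin, bellNum,
    Nat.card_congr (finSuccEquiv n).setoidCongr]

/-- The number of labeled rank-2 matroids on a fixed `n`-element ground set is
`b(n+1) - 2^n`. -/
theorem rank_two_matroid_count (n : ℕ) (hn : 2 ≤ n) :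
    Nat.card {M : Matroid (Fin n) // M.E = Set.univ ∧ ∀ B, M.IsBase B → B.ncard = 2} =
      bellNum (n + 1) - 2 ^ n :=
  rank_two_matroid_count_general n
end

section
/- For all natural numbers r and n with 2 < r < n, the number of rank-r paving matroids on a fixed n-element ground set is strictly greater than 2^{C(n,r)/(2n)}, where C(n,r) is the binomial coefficient and the inequality is between real numbers. -/
/-!
A family `H` of `r`-sets in which no set extends to two different members of `H` by adding one
element is the set of circuit-hyperplanes of a sparse paving matroid of rank `r` (independent sets:
the sets of size at most `r` outside `H`), and every subfamily of `H` is again such a family, so `H`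
alone yields `2 ^ |H|` distinct paving matroids. On the ground set `ℤ/n`, the `r`-sets with a
prescribed element sum form such a family, since two of them sharing `r - 1` elements must agree in
the remaining one; by pigeonhole one of these `n` families has at least `C(n,r)/n` members.
-/

open Set

theorem Set.exists_div_le_ncard_fiber {α β : Type*} [Finite β] [Nonempty β] {s : Set α}
    (hs : s.Finite) (f : α → β) : ∃ y, (s.ncard : ℝ) / Nat.card β ≤ {x ∈ s | f x = y}.ncard := by
  classical
  have := Fintype.ofFinite β
  lift s to Finset α using hs
  obtain ⟨y, -, hy⟩ := Finset.exists_le_card_fiber_of_nsmul_le_card_of_maps_to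
    (fun a _ => Finset.mem_univ (f a)) Finset.univ_nonempty
    (b := (s.card : ℝ) / Nat.card β)
    (by rw [nsmul_eq_mul, Finset.card_univ, Nat.card_eq_fintype_card, mul_div_cancel₀]
        exact_mod_cast Fintype.card_ne_zero)
  have hfiber : {x ∈ (s : Set α) | f x = y} = ↑(s.filter (f · = y)) := by ext; simp
  exact ⟨y, by rwa [hfiber, ncard_coe_finset, ncard_coe_finset]⟩

variable {α : Type*} [Finite α] {r : ℕ} {H : Set (Set α)}

theorem subsingleton_setOf_insert_mem_of_finsum_eq {G : Type*} [AddCommGroup G] {f : α → G}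
    (hf : Function.Injective f) {c : G} (hH : ∀ S ∈ H, ∑ᶠ x ∈ S, f x = c) (I : Set α) :
    {e | e ∉ I ∧ insert e I ∈ H}.Subsingleton := by
  rintro e ⟨heI, he⟩ e' ⟨he'I, he'⟩
  have hsum := (hH _ he).trans (hH _ he').symm
  rw [finsum_mem_insert f heI I.toFinite, finsum_mem_insert f he'I I.toFinite] at hsum
  exact hf (add_right_cancel hsum)

namespace Matroid

variable {I J B : Set α}

instance : Finite (Matroid α) :=
  finite_univ_iff.mp (by simpa using finite_setOfPred_matroid (finite_univ (α := α)))

theorem sparsePaving_indep_subset (hH : ∀ S ∈ H, S.ncard = r) (hJ : J.ncard ≤ r ∧ J ∉ H)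
    (hIJ : I ⊆ J) : I.ncard ≤ r ∧ I ∉ H := by
  refine ⟨(ncard_le_ncard hIJ).trans hJ.1, fun hI => hJ.2 ?_⟩
  rwa [← eq_of_subset_of_ncard_le hIJ (hH I hI ▸ hJ.1)]

theorem sparsePaving_indep_aug (hsep : ∀ I, {e | e ∉ I ∧ insert e I ∈ H}.Subsingleton)
    (hJ : J.ncard ≤ r ∧ J ∉ H) (hIJ : I.ncard < J.ncard) :
    ∃ e ∈ J, e ∉ I ∧ (insert e I).ncard ≤ r ∧ insert e I ∉ H := by
  by_contra! h
  have hins : ∀ e ∈ J \ I, insert e I ∈ H := fun e he =>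
    h e he.1 he.2 (by rw [ncard_insert_of_notMem he.2]; omega)
  obtain ⟨e, heJ, heI⟩ := exists_mem_notMem_of_ncard_lt_ncard hIJ
  have hJe : J ⊆ insert e I := fun x hx => by
    by_cases hxI : x ∈ I
    · exact mem_insert_of_mem _ hxI
    · exact hsep I ⟨hxI, hins x ⟨hx, hxI⟩⟩ ⟨heI, hins e ⟨heJ, heI⟩⟩ ▸ mem_insert x I
  have hJ_eq : J = insert e I :=
    eq_of_subset_of_ncard_le hJe (by rw [ncard_insert_of_notMem heI]; omega)
  exact hJ.2 (hJ_eq ▸ hins e ⟨heJ, heI⟩)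

/-- The sparse paving matroid of rank `r` whose circuit-hyperplanes are the members of `H`. -/
def sparsePaving (r : ℕ) (H : Set (Set α)) (hr : 0 < r) (hH : ∀ S ∈ H, S.ncard = r)
    (hsep : ∀ I, {e | e ∉ I ∧ insert e I ∈ H}.Subsingleton) : Matroid α :=
  (IndepMatroid.ofFinite finite_univ (fun I => I.ncard ≤ r ∧ I ∉ H)
    ⟨by simp, fun h => hr.ne (by simpa using hH ∅ h)⟩
    (fun _ _ hJ hIJ => sparsePaving_indep_subset hH hJ hIJ)
    (fun _ _ _ hJ hIJ => sparsePaving_indep_aug hsep hJ hIJ)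
    (fun I _ => subset_univ I)).matroid

variable {hr : 0 < r} {hH : ∀ S ∈ H, S.ncard = r}
  {hsep : ∀ I, {e | e ∉ I ∧ insert e I ∈ H}.Subsingleton}

theorem sparsePaving_indep_iff :
    (sparsePaving r H hr hH hsep).Indep I ↔ I.ncard ≤ r ∧ I ∉ H :=
  Iff.rfl

theorem sparsePaving_indep_of_ncard_lt (hI : I.ncard < r) :
    (sparsePaving r H hr hH hsep).Indep I :=
  ⟨hI.le, fun h => hI.ne (hH I h)⟩

theorem setOf_ncard_eq_not_indep_sparsePaving :
    {S | S.ncard = r ∧ ¬(sparsePaving r H hr hH hsep).Indep S} = H := by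
  ext S
  simp only [sparsePaving_indep_iff, not_and, not_not]
  exact ⟨fun h => h.2 h.1.le, fun h => ⟨hH S h, fun _ => h⟩⟩

theorem exists_insert_indep_sparsePaving (hrα : r < Nat.card α) (hI : I.ncard < r) :
    ∃ e ∉ I, (sparsePaving r H hr hH hsep).Indep (insert e I) := by
  have hcompl : Iᶜ.Nontrivial := by
    rw [← one_lt_ncard_iff_nontrivial]
    have := ncard_add_ncard_compl I
    omega
  obtain ⟨e, heI, heH⟩ : ∃ e ∈ Iᶜ, e ∉ {e | e ∉ I ∧ insert e I ∈ H} :=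
    not_subset.mp fun h => hcompl.not_subsingleton ((hsep I).anti h)
  exact ⟨e, heI, by rw [ncard_insert_of_notMem heI]; omega, fun h => heH ⟨heI, h⟩⟩

theorem sparsePaving_isBase_ncard (hrα : r < Nat.card α)
    (hB : (sparsePaving r H hr hH hsep).IsBase B) : B.ncard = r := by
  by_contra hne
  obtain ⟨e, heB, he⟩ := exists_insert_indep_sparsePaving hrα (lt_of_le_of_ne hB.indep.1 hne)
  exact (hB.insert_dep ⟨mem_univ e, heB⟩).not_indep he

theorem two_pow_ncard_le_card_paving (hr : 0 < r) (hrα : r < Nat.card α)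
    (hH : ∀ S ∈ H, S.ncard = r) (hsep : ∀ I, {e | e ∉ I ∧ insert e I ∈ H}.Subsingleton) :
    2 ^ H.ncard ≤ Nat.card {M : Matroid α // M.E = univ ∧ (∀ B, M.IsBase B → B.ncard = r) ∧
      ∀ S : Set α, S.ncard = r - 1 → M.Indep S} := by
  let φ : 𝒫 H → {M : Matroid α // M.E = univ ∧ (∀ B, M.IsBase B → B.ncard = r) ∧
      ∀ S : Set α, S.ncard = r - 1 → M.Indep S} := fun K =>
    ⟨sparsePaving r K hr (fun S hS => hH S (K.2 hS))
        (fun I => (hsep I).anti fun _ he => ⟨he.1, K.2 he.2⟩),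
      rfl, fun _ => sparsePaving_isBase_ncard hrα,
      fun _ hS => sparsePaving_indep_of_ncard_lt (by omega)⟩
  have hφ : φ.Injective := fun K L hKL => Subtype.ext <| by
    simpa only [φ, setOf_ncard_eq_not_indep_sparsePaving] using
      congrArg (fun M => {S | S.ncard = r ∧ ¬M.1.Indep S}) hKL
  rw [← ncard_powerset H, ← Nat.card_coe_set_eq]
  exact Nat.card_le_card_of_injective φ hφ

end Matroid

/-- For `2 < r < n`, the number of labeled rank-`r` paving matroids on a fixed `n`-element
ground set is strictly greater than `2 ^ (C(n,r) / (2n))` (as real numbers). -/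
theorem paving_matroid_count_lower_bound (n r : ℕ) (hr : 2 < r) (hrn : r < n) :
    (Nat.card {M : Matroid (Fin n) // M.E = Set.univ ∧ (∀ B, M.IsBase B → B.ncard = r) ∧
        ∀ S : Set (Fin n), S.ncard = r - 1 → M.Indep S} : ℝ) >
      (2 : ℝ) ^ ((n.choose r : ℝ) / (2 * n)) := by
  have hn0 : NeZero n := ⟨by omega⟩
  obtain ⟨c, hc⟩ := exists_div_le_ncard_fiber
    (toFinite {S : Set (Fin n) | S ⊆ univ ∧ S.ncard = r}) (fun S => ∑ᶠ x ∈ S, x)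
  set H := {S | (S ⊆ univ ∧ S.ncard = r) ∧ ∑ᶠ x ∈ S, x = c}
  have hsep := subsingleton_setOf_insert_mem_of_finsum_eq (H := H) (f := id)
    Function.injective_id (fun S hS => hS.2)
  have hcount := Matroid.two_pow_ncard_le_card_paving (by omega) (by simpa using hrn)
    (fun S hS => hS.1.2) hsep
  rw [ncard_powerset_ncard finite_univ, ncard_univ, Nat.card_fin] at hc
  have hchoose : (0 : ℝ) < n.choose r := by exact_mod_cast Nat.choose_pos hrn.le
  have hn : (0 : ℝ) < n := by exact_mod_cast hn0.pos
  calc (2 : ℝ) ^ ((n.choose r : ℝ) / (2 * n))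
      < 2 ^ ((n.choose r : ℝ) / n) :=
        Real.rpow_lt_rpow_of_exponent_lt one_lt_two
          (div_lt_div_of_pos_left hchoose hn (by linarith))
    _ ≤ 2 ^ (H.ncard : ℝ) := Real.rpow_le_rpow_of_exponent_le one_le_two hc
    _ = ((2 ^ H.ncard : ℕ) : ℝ) := by push_cast; exact Real.rpow_natCast 2 _
    _ ≤ _ := by exact_mod_cast hcount
end

section
/- Let m be a natural number, n = 2^m − 1, and let the ground set be the set of nonzero vectors of the vector space (ZMod 2)^m, which has n elements. For r ≥ 2, let U(r) denote the collection of r-element subsets of this ground set whose elements sum to the zero vector. Then |U(3)| = C(n,3)/(n−2), |U(4)| = C(n,4)/(n−2), and for all r ≥ 4, (r+1)·|U(r+1)| = C(n,r) − |U(r)| − (n−r+1)·|U(r−1)|, where C(a,b) denotes the binomial coefficient. -/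
/-- The collection of `r`-element sets of nonzero vectors of `(ZMod 2)^m` whose elements
sum to the zero vector. -/
def sumZeroSets (m r : ℕ) : Set (Finset (Fin m → ZMod 2)) :=
  {s | s.card = r ∧ (∀ v ∈ s, v ≠ 0) ∧ ∑ v ∈ s, v = 0}

/-!
Split the `r`-sets `s` of nonzero vectors of an elementary abelian `2`-group by their sum `x`.
If `x = 0`, then `s ∈ U(r)`. If `x ≠ 0` and `x ∉ s`, then `s ∪ {x} ∈ U(r+1)`, and each
`t ∈ U(r+1)` arises from exactly `r + 1` such `s`, namely `t \ {y}` for `y ∈ t`. If `x ∈ s`, then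
`s \ {x} ∈ U(r-1)`, and each `t ∈ U(r-1)` arises from the `n - r + 1` choices of `x ∉ t`.
Hence `C(n,r) = |U(r)| + (r+1)|U(r+1)| + (n-r+1)|U(r-1)|`. Since `U(1) = U(2) = ∅`, the cases
`r = 2, 3` give `3|U(3)| = C(n,2)` and `4|U(4)| + |U(3)| = C(n,3)`, from which the closed forms
follow via `C(n,k+1)(k+1) = C(n,k)(n-k)`.
-/

open Finset

theorem Nat.eq_div_of_mul_eq_of_le {a b k : ℕ} (h : k * a = b) (hab : a ≤ b) : a = b / k := by
  rcases k.eq_zero_or_pos with rfl | hk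
  · subst h
    simp_all
  · rw [← h, Nat.mul_div_cancel_left a hk]

theorem ZModModule.sum_erase_eq_sum_add {V : Type*} [AddCommGroup V] [Module (ZMod 2) V]
    [DecidableEq V] {s : Finset V} {x : V} (hx : x ∈ s) :
    ∑ v ∈ s.erase x, v = ∑ v ∈ s, v + x := by
  rw [sum_erase_eq_sub hx, ZModModule.sub_eq_add]

section ZeroSumSubsets

variable {V : Type*} [AddCommGroup V] [Fintype V] [DecidableEq V]

variable (V) in
def zeroSumSubsets (r : ℕ) : Finset (Finset V) :=
  {s ∈ (univ.erase 0).powersetCard r | ∑ v ∈ s, v = 0}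

theorem mem_zeroSumSubsets {r : ℕ} {s : Finset V} :
    s ∈ zeroSumSubsets V r ↔ 0 ∉ s ∧ #s = r ∧ ∑ v ∈ s, v = 0 := by
  simp [zeroSumSubsets, mem_powersetCard, subset_erase, and_assoc]

theorem card_zeroSumSubsets_le (r : ℕ) :
    #(zeroSumSubsets V r) ≤ (Fintype.card V - 1).choose r := by
  calc #(zeroSumSubsets V r) ≤ #((univ.erase (0 : V)).powersetCard r) := card_filter_le _ _
    _ = (Fintype.card V - 1).choose r := by
      rw [card_powersetCard, card_erase_of_mem (mem_univ _), card_univ]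

theorem zeroSumSubsets_one : zeroSumSubsets V 1 = ∅ := by
  refine eq_empty_of_forall_notMem fun s hs => ?_
  obtain ⟨h0, hcard, hsum⟩ := mem_zeroSumSubsets.1 hs
  obtain ⟨a, rfl⟩ := card_eq_one.1 hcard
  simp_all

variable [Module (ZMod 2) V]

theorem zeroSumSubsets_two : zeroSumSubsets V 2 = ∅ := by
  refine eq_empty_of_forall_notMem fun s hs => ?_
  obtain ⟨-, hcard, hsum⟩ := mem_zeroSumSubsets.1 hs
  obtain ⟨a, b, hab, rfl⟩ := card_eq_two.1 hcard
  rw [sum_pair hab, add_eq_zero_iff_eq_neg, ZModModule.neg_eq_self] at hsum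
  exact hab hsum

theorem card_filter_sum_notMem (r : ℕ) :
    #{s ∈ (univ.erase (0 : V)).powersetCard (r + 1) | ∑ v ∈ s, v ≠ 0 ∧ ∑ v ∈ s, v ∉ s} =
      (r + 2) * #(zeroSumSubsets V (r + 2)) := by
  have hsigma : #((zeroSumSubsets V (r + 2)).sigma fun t => t) =
      (r + 2) * #(zeroSumSubsets V (r + 2)) := by
    rw [card_sigma, sum_const_nat fun t ht => (mem_zeroSumSubsets.1 ht).2.1, mul_comm]
  rw [← hsigma]
  refine card_nbij' (fun s => ⟨insert (∑ v ∈ s, v) s, ∑ v ∈ s, v⟩) (fun p => p.1.erase p.2)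
    ?_ ?_ ?_ ?_
  · intro s hs
    obtain ⟨hs, hsum, hnotMem⟩ := mem_filter.1 hs
    obtain ⟨⟨-, h0⟩, hcard⟩ := mem_powersetCard.1 hs |>.imp_left subset_erase.1
    simp only [coe_sigma, Set.mem_sigma_iff, mem_coe, mem_zeroSumSubsets]
    refine ⟨⟨?_, ?_, ?_⟩, mem_insert_self _ _⟩
    · simp [h0, Ne.symm hsum]
    · rw [card_insert_of_notMem hnotMem, hcard]
    · rw [sum_insert hnotMem, ZModModule.add_self]
  · rintro ⟨t, x⟩ h
    simp only [coe_sigma, Set.mem_sigma_iff, mem_coe, mem_zeroSumSubsets] at h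
    obtain ⟨⟨h0, hcard, hsum⟩, hx⟩ := h
    have hx0 : x ≠ 0 := ne_of_mem_of_not_mem hx h0
    simp only [coe_filter, mem_powersetCard, subset_erase, Set.mem_ofPred_eq,
      ZModModule.sum_erase_eq_sum_add hx, hsum, zero_add]
    refine ⟨⟨⟨subset_univ _, fun h => h0 (mem_of_mem_erase h)⟩, ?_⟩, hx0, notMem_erase _ _⟩
    rw [card_erase_of_mem hx, hcard]
    rfl
  · intro s hs
    obtain ⟨-, -, hnotMem⟩ := mem_filter.1 hs
    exact erase_insert hnotMem
  · rintro ⟨t, x⟩ h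
    simp only [coe_sigma, Set.mem_sigma_iff, mem_coe, mem_zeroSumSubsets] at h
    obtain ⟨⟨-, -, hsum⟩, hx⟩ := h
    simp [ZModModule.sum_erase_eq_sum_add hx, hsum, insert_erase hx]

theorem card_filter_sum_mem (r : ℕ) :
    (#{s ∈ (univ.erase (0 : V)).powersetCard (r + 1) | ∑ v ∈ s, v ≠ 0 ∧ ∑ v ∈ s, v ∈ s} : ℤ) =
      (((Fintype.card V - 1 : ℕ) : ℤ) - r) * #(zeroSumSubsets V r) := by
  have hsigma : (#((zeroSumSubsets V r).sigma fun t => univ.erase 0 \ t) : ℤ) =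
      (((Fintype.card V - 1 : ℕ) : ℤ) - r) * #(zeroSumSubsets V r) := by
    rw [card_sigma, Nat.cast_sum, sum_congr rfl fun t ht => ?_, sum_const, nsmul_eq_mul,
      mul_comm]
    obtain ⟨h0, hcard, -⟩ := mem_zeroSumSubsets.1 ht
    have ht : t ⊆ univ.erase 0 := subset_erase.2 ⟨subset_univ _, h0⟩
    rw [card_sdiff_of_subset ht, Nat.cast_sub (card_le_card ht), hcard,
      card_erase_of_mem (mem_univ _), card_univ]
  rw [← hsigma]
  congr 1
  refine card_nbij' (fun s => ⟨s.erase (∑ v ∈ s, v), ∑ v ∈ s, v⟩) (fun p => insert p.2 p.1)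
    ?_ ?_ ?_ ?_
  · intro s hs
    obtain ⟨hs, hsum, hmem⟩ := mem_filter.1 hs
    obtain ⟨⟨-, h0⟩, hcard⟩ := mem_powersetCard.1 hs |>.imp_left subset_erase.1
    simp only [coe_sigma, Set.mem_sigma_iff, mem_coe, mem_zeroSumSubsets, mem_sdiff, mem_erase]
    have hx0 : ∑ v ∈ s, v ≠ 0 := ne_of_mem_of_not_mem hmem h0
    refine ⟨⟨fun h => h0 h.2, ?_, ?_⟩, ⟨hx0, mem_univ _⟩, by simp⟩
    · rw [card_erase_of_mem hmem, hcard]; rfl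
    · rw [ZModModule.sum_erase_eq_sum_add hmem, ZModModule.add_self]
  · rintro ⟨t, x⟩ h
    simp only [coe_sigma, Set.mem_sigma_iff, mem_coe, mem_zeroSumSubsets, mem_sdiff,
      mem_erase] at h
    obtain ⟨⟨h0, hcard, hsum⟩, ⟨hx0, -⟩, hx⟩ := h
    simp only [coe_filter, mem_powersetCard, subset_erase, Set.mem_ofPred_eq, sum_insert hx,
      hsum, add_zero]
    refine ⟨⟨⟨subset_univ _, ?_⟩, by rw [card_insert_of_notMem hx, hcard]⟩, hx0,
      mem_insert_self _ _⟩
    simp [Ne.symm hx0, h0]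
  · intro s hs
    obtain ⟨-, -, hmem⟩ := mem_filter.1 hs
    exact insert_erase hmem
  · rintro ⟨t, x⟩ h
    simp only [coe_sigma, Set.mem_sigma_iff, mem_coe, mem_zeroSumSubsets, mem_sdiff] at h
    obtain ⟨⟨-, -, hsum⟩, -, hx⟩ := h
    simp [sum_insert hx, hsum, erase_insert hx]

theorem card_zeroSumSubsets_recursion (r : ℕ) :
    ((r : ℤ) + 2) * #(zeroSumSubsets V (r + 2)) + #(zeroSumSubsets V (r + 1)) +
        (((Fintype.card V - 1 : ℕ) : ℤ) - r) * #(zeroSumSubsets V r) =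
      (Fintype.card V - 1).choose (r + 1) := by
  set P := (univ.erase (0 : V)).powersetCard (r + 1)
  have hP : #P = (Fintype.card V - 1).choose (r + 1) := by
    rw [card_powersetCard, card_erase_of_mem (mem_univ _), card_univ]
  have hsplit : #(zeroSumSubsets V (r + 1)) +
      (#{s ∈ P | ∑ v ∈ s, v ≠ 0 ∧ ∑ v ∈ s, v ∉ s} + #{s ∈ P | ∑ v ∈ s, v ≠ 0 ∧ ∑ v ∈ s, v ∈ s})
        = #P := by
    rw [← filter_filter, ← filter_filter, add_comm (#(filter _ _)),
      card_filter_add_card_filter_not, zeroSumSubsets, card_filter_add_card_filter_not]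
  rw [← hP, ← hsplit, card_filter_sum_notMem]
  push_cast
  rw [card_filter_sum_mem]
  ring

theorem three_mul_card_zeroSumSubsets_three :
    3 * #(zeroSumSubsets V 3) = (Fintype.card V - 1).choose 2 := by
  have h := card_zeroSumSubsets_recursion (V := V) 1
  rw [zeroSumSubsets_one, zeroSumSubsets_two] at h
  norm_num at h
  exact_mod_cast h

theorem four_mul_card_zeroSumSubsets_four :
    4 * #(zeroSumSubsets V 4) + #(zeroSumSubsets V 3) = (Fintype.card V - 1).choose 3 := by
  have h := card_zeroSumSubsets_recursion (V := V) 2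
  rw [zeroSumSubsets_two] at h
  norm_num at h
  exact_mod_cast h

theorem sub_two_mul_card_zeroSumSubsets_three :
    (Fintype.card V - 1 - 2) * #(zeroSumSubsets V 3) = (Fintype.card V - 1).choose 3 := by
  apply Nat.eq_of_mul_eq_mul_left (show 0 < 3 by norm_num)
  rw [mul_left_comm, three_mul_card_zeroSumSubsets_three, mul_comm 3,
    Nat.choose_succ_right_eq _ 2, mul_comm]

theorem sub_two_mul_card_zeroSumSubsets_four :
    (Fintype.card V - 1 - 2) * #(zeroSumSubsets V 4) = (Fintype.card V - 1).choose 4 := by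
  have h3 := sub_two_mul_card_zeroSumSubsets_three (V := V)
  have h4 := four_mul_card_zeroSumSubsets_four (V := V)
  set N := Fintype.card V - 1
  have hsub : (N - 3) * #(zeroSumSubsets V 3) =
      (N - 2) * #(zeroSumSubsets V 3) - #(zeroSumSubsets V 3) := by
    rw [show N - 3 = N - 2 - 1 by omega, Nat.sub_one_mul]
  have h44 : 4 * #(zeroSumSubsets V 4) = (N - 3) * #(zeroSumSubsets V 3) := by omega
  apply Nat.eq_of_mul_eq_mul_left (show 0 < 4 by norm_num)
  calc 4 * ((N - 2) * #(zeroSumSubsets V 4)) = (N - 2) * (4 * #(zeroSumSubsets V 4)) := by ring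
    _ = (N - 2) * ((N - 3) * #(zeroSumSubsets V 3)) := by rw [h44]
    _ = (N - 3) * N.choose 3 := by rw [← h3]; ring
    _ = 4 * N.choose 4 := by rw [mul_comm, ← Nat.choose_succ_right_eq, mul_comm]

theorem card_zeroSumSubsets_three :
    #(zeroSumSubsets V 3) = (Fintype.card V - 1).choose 3 / (Fintype.card V - 1 - 2) :=
  Nat.eq_div_of_mul_eq_of_le sub_two_mul_card_zeroSumSubsets_three (card_zeroSumSubsets_le 3)

theorem card_zeroSumSubsets_four :
    #(zeroSumSubsets V 4) = (Fintype.card V - 1).choose 4 / (Fintype.card V - 1 - 2) :=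
  Nat.eq_div_of_mul_eq_of_le sub_two_mul_card_zeroSumSubsets_four (card_zeroSumSubsets_le 4)

end ZeroSumSubsets

theorem sumZeroSets_eq_coe_zeroSumSubsets (m r : ℕ) :
    sumZeroSets m r = zeroSumSubsets (Fin m → ZMod 2) r := by
  ext s
  simp only [sumZeroSets, Set.mem_ofPred_eq, mem_coe, mem_zeroSumSubsets,
    forall_mem_not_eq']
  tauto

/-- With `n = 2^m - 1`: `|U(3)| = C(n,3)/(n-2)`, `|U(4)| = C(n,4)/(n-2)`, and for `r ≥ 4`,
`(r+1)·|U(r+1)| = C(n,r) - |U(r)| - (n-r+1)·|U(r-1)|`. -/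
theorem sumZeroSets_card_recursion (m n : ℕ) (hn : n = 2 ^ m - 1) :
    (sumZeroSets m 3).ncard = n.choose 3 / (n - 2) ∧
    (sumZeroSets m 4).ncard = n.choose 4 / (n - 2) ∧
    ∀ r : ℕ, 4 ≤ r →
      ((r : ℤ) + 1) * (sumZeroSets m (r + 1)).ncard =
        (n.choose r : ℤ) - (sumZeroSets m r).ncard -
          ((n : ℤ) - r + 1) * (sumZeroSets m (r - 1)).ncard := by
  obtain rfl : n = Fintype.card (Fin m → ZMod 2) - 1 := by simp [hn]
  simp only [sumZeroSets_eq_coe_zeroSumSubsets, Set.ncard_coe_finset]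
  refine ⟨card_zeroSumSubsets_three, card_zeroSumSubsets_four, fun r hr => ?_⟩
  obtain ⟨k, rfl⟩ : ∃ k, r = k + 1 := ⟨r - 1, by omega⟩
  have h := card_zeroSumSubsets_recursion (V := Fin m → ZMod 2) k
  push_cast at h ⊢
  linear_combination h
end

section
/- Let m be a natural number with 2^m − 1 = n, identify the ground set with the set of nonzero vectors of (ZMod 2)^m, and for r ≥ 2 let U(r) be the collection of r-element subsets of the ground set whose elements sum to the zero vector. Then for every r with 4 ≤ r < n, the number of rank-r paving matroids on this n-element ground set is at least 2^{|U(r)|}. -/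
/-- The collection of `r`-element sets of nonzero vectors of `(ZMod 2)^m` whose elements
sum to the zero vector, as sets of the type of nonzero vectors. -/
def sumZeroSubsets (m r : ℕ) : Set (Finset {v : Fin m → ZMod 2 // v ≠ 0}) :=
  {s | s.card = r ∧ ∑ v ∈ s, (v : Fin m → ZMod 2) = 0}

/-!
If `A` is a family of `r`-sets no two of which share `r - 1` elements, then declaring the
members of `A` dependent in the uniform matroid `U_{r,n}` still gives a matroid: the only
augmentation that could fail adds one element to an `(r-1)`-set `I`, and at most one such
extension of `I` lies in `A`, so as soon as two candidates exist one of them works. The result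
is a paving matroid of rank `r` (when `r < n`), and it determines `A` as its set of dependent
`r`-sets. Two zero-sum `r`-sets sharing `r - 1` elements coincide, since the remaining element is
the sum of the shared ones; hence each of the `2 ^ |U(r)|` subfamilies of `U(r)` yields a
different paving matroid.
-/

open Finset

variable {α : Type*} {r : ℕ} {A : Set (Finset α)}

def sparsePavingIndep (r : ℕ) (A : Set (Finset α)) (I : Finset α) : Prop :=
  I.card < r ∨ I.card = r ∧ I ∉ A

theorem sparsePavingIndep.card_le {I : Finset α} (hI : sparsePavingIndep r A I) :
    I.card ≤ r :=
  hI.elim le_of_lt fun h ↦ h.1.le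

theorem sparsePavingIndep_empty (hr : 0 < r) : sparsePavingIndep r A ∅ :=
  Or.inl (by simpa using hr)

theorem sparsePavingIndep_of_subset {I J : Finset α} (hJ : sparsePavingIndep r A J)
    (hIJ : I ⊆ J) : sparsePavingIndep r A I := by
  rcases hIJ.eq_or_ssubset with rfl | hIJ
  · exact hJ
  · exact Or.inl ((card_lt_card hIJ).trans_le hJ.card_le)

variable [DecidableEq α]

/-- For a family of `r`-sets: two distinct members share at most `r - 2` elements. -/
def IsSparsePavingFamily (A : Set (Finset α)) : Prop :=
  ∀ I : Finset α, {e | e ∉ I ∧ insert e I ∈ A}.Subsingleton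

theorem IsSparsePavingFamily.mono {B : Set (Finset α)} (hA : IsSparsePavingFamily A)
    (hBA : B ⊆ A) : IsSparsePavingFamily B :=
  fun I ↦ (hA I).anti fun _ he ↦ ⟨he.1, hBA he.2⟩

theorem insert_mem_of_not_sparsePavingIndep {I : Finset α} {e : α} (he : e ∉ I)
    (hI : I.card < r) (h : ¬ sparsePavingIndep r A (insert e I)) : insert e I ∈ A := by
  rw [sparsePavingIndep, card_insert_of_notMem he] at h
  by_contra hA
  exact h ((Nat.succ_le_of_lt hI).lt_or_eq.imp id fun h' ↦ ⟨h', hA⟩)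

theorem exists_sparsePavingIndep_insert (hA : IsSparsePavingFamily A) {I T : Finset α}
    (hI : I.card < r) (hT : 1 < (T \ I).card) :
    ∃ e ∈ T, e ∉ I ∧ sparsePavingIndep r A (insert e I) := by
  obtain ⟨a, ha, b, hb, hab⟩ := one_lt_card.1 hT
  rw [mem_sdiff] at ha hb
  by_contra! h
  exact hab <| hA I ⟨ha.2, insert_mem_of_not_sparsePavingIndep ha.2 hI (h a ha.1 ha.2)⟩
    ⟨hb.2, insert_mem_of_not_sparsePavingIndep hb.2 hI (h b hb.1 hb.2)⟩

theorem sparsePavingIndep_aug (hA : IsSparsePavingFamily A) {I J : Finset α}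
    (hJ : sparsePavingIndep r A J) (hIJ : I.card < J.card) :
    ∃ e ∈ J, e ∉ I ∧ sparsePavingIndep r A (insert e I) := by
  by_cases hT : 1 < (J \ I).card
  · exact exists_sparsePavingIndep_insert hA (hIJ.trans_le hJ.card_le) hT
  -- otherwise `J \ I` is a single element and `I ⊆ J`
  have hJI := card_sdiff_add_card_inter J I
  have hIJ' := card_sdiff_add_card_inter I J
  rw [inter_comm] at hIJ'
  obtain ⟨e, he, rfl⟩ : ∃ e ∉ I, insert e I = J := by
    refine exists_eq_insert_iff.2 ⟨?_, by omega⟩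
    exact sdiff_eq_empty_iff_subset.1 (card_eq_zero.1 (by omega))
  exact ⟨e, mem_insert_self e I, he, hJ⟩

section SparsePaving

/-- The sparse paving matroid of rank `r` on `α` whose circuit-hyperplanes are the `r`-sets
in `A`. -/
def sparsePavingMatroid (r : ℕ) (A : Set (Finset α)) (hr : 0 < r)
    (hA : IsSparsePavingFamily A) : Matroid α :=
  (IndepMatroid.ofFinset Set.univ (sparsePavingIndep r A) (sparsePavingIndep_empty hr)
    (fun _ _ ↦ sparsePavingIndep_of_subset) (fun _ _ _ hJ ↦ sparsePavingIndep_aug hA hJ)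
    (fun _ _ ↦ Set.subset_univ _)).matroid

variable {hr : 0 < r} {hA : IsSparsePavingFamily A}

theorem sparsePavingMatroid_indep_coe_iff {I : Finset α} :
    (sparsePavingMatroid r A hr hA).Indep I ↔ sparsePavingIndep r A I := by
  rw [sparsePavingMatroid, IndepMatroid.matroid_Indep, IndepMatroid.ofFinset_indep]

theorem sparsePavingMatroid_indep_of_ncard_lt [Finite α] {S : Set α} (hS : S.ncard < r) :
    (sparsePavingMatroid r A hr hA).Indep S := by
  obtain ⟨S, rfl⟩ := S.toFinite.exists_finset_coe
  rw [Set.ncard_coe_finset] at hS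
  exact sparsePavingMatroid_indep_coe_iff.2 (Or.inl hS)

theorem sparsePavingMatroid_indep_coe_iff_notMem {s : Finset α} (hs : s.card = r) :
    (sparsePavingMatroid r A hr hA).Indep s ↔ s ∉ A := by
  simp [sparsePavingMatroid_indep_coe_iff, sparsePavingIndep, hs]

theorem sparsePavingMatroid_isBase_ncard [Fintype α] (hrn : r < Fintype.card α) {B : Set α}
    (hB : (sparsePavingMatroid r A hr hA).IsBase B) : B.ncard = r := by
  obtain ⟨B, rfl⟩ := B.toFinite.exists_finset_coe
  rw [Set.ncard_coe_finset]
  have hBr := (sparsePavingMatroid_indep_coe_iff.1 hB.indep).card_le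
  refine hBr.eq_or_lt.resolve_right fun hlt ↦ ?_
  obtain ⟨e, -, he, hins⟩ := exists_sparsePavingIndep_insert hA hlt (T := univ)
    (by rw [card_univ_sdiff]; omega)
  have hBe := hB.eq_of_subset_indep (sparsePavingMatroid_indep_coe_iff.2 hins)
    (by simp [Set.subset_insert])
  exact he (coe_inj.1 hBe ▸ mem_insert_self e B)

theorem eq_of_sparsePavingMatroid_eq {A' : Set (Finset α)} {hA' : IsSparsePavingFamily A'}
    (hAr : ∀ s ∈ A, s.card = r) (hA'r : ∀ s ∈ A', s.card = r)
    (h : sparsePavingMatroid r A hr hA = sparsePavingMatroid r A' hr hA') : A = A' := by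
  ext s
  by_cases hs : s.card = r
  · have hsA := sparsePavingMatroid_indep_coe_iff_notMem (hr := hr) (hA := hA) hs
    rw [h, sparsePavingMatroid_indep_coe_iff_notMem hs] at hsA
    exact not_iff_not.1 hsA.symm
  · exact iff_of_false (mt (hAr s) hs) (mt (hA'r s) hs)

end SparsePaving

instance Matroid.instFinite [Finite α] : Finite (Matroid α) :=
  Finite.of_injective (fun M ↦ (M.E, M.Indep)) fun _ _ h ↦
    Matroid.ext_indep (congrArg Prod.fst h) fun I _ ↦ Iff.of_eq (congrFun (congrArg Prod.snd h) I)

theorem isSparsePavingFamily_sumZeroSubsets (m r : ℕ) :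
    IsSparsePavingFamily (sumZeroSubsets m r) := by
  rintro I e ⟨he, -, hes⟩ f ⟨hf, -, hfs⟩
  rw [sum_insert he] at hes
  rw [sum_insert hf] at hfs
  exact Subtype.ext (add_right_cancel (hes.trans hfs.symm))

/-- With the ground set identified with the nonzero vectors of `(ZMod 2)^m` (of size
`n = 2^m - 1`), for `4 ≤ r < n` the number of labeled rank-`r` paving matroids on this
ground set is at least `2 ^ |U(r)|`. -/
theorem paving_matroid_count_ge_two_pow (m n r : ℕ) (hn : n = 2 ^ m - 1)
    (hr : 4 ≤ r) (hrn : r < n) :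
    2 ^ (sumZeroSubsets m r).ncard ≤
      Nat.card {M : Matroid {v : Fin m → ZMod 2 // v ≠ 0} //
        M.E = Set.univ ∧ (∀ B, M.IsBase B → B.ncard = r) ∧
        ∀ S : Set {v : Fin m → ZMod 2 // v ≠ 0}, S.ncard = r - 1 → M.Indep S} := by
  have hr0 : 0 < r := by omega
  have hcard : Fintype.card {v : Fin m → ZMod 2 // v ≠ 0} = n := by simp [hn]
  have hsparse (A : 𝒫 sumZeroSubsets m r) : IsSparsePavingFamily (A : Set _) :=
    (isSparsePavingFamily_sumZeroSubsets m r).mono A.2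
  let f (A : 𝒫 sumZeroSubsets m r) : {M : Matroid {v : Fin m → ZMod 2 // v ≠ 0} //
      M.E = Set.univ ∧ (∀ B, M.IsBase B → B.ncard = r) ∧
      ∀ S : Set {v : Fin m → ZMod 2 // v ≠ 0}, S.ncard = r - 1 → M.Indep S} :=
    ⟨sparsePavingMatroid r A hr0 (hsparse A), rfl,
      fun _ ↦ sparsePavingMatroid_isBase_ncard (hcard ▸ hrn),
      fun _ hS ↦ sparsePavingMatroid_indep_of_ncard_lt (by omega)⟩
  have hf : f.Injective := fun A A' h ↦ Subtype.ext <| eq_of_sparsePavingMatroid_eq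
    (fun _ hs ↦ (A.2 hs).1) (fun _ hs ↦ (A'.2 hs).1) (Subtype.mk.inj h)
  calc 2 ^ (sumZeroSubsets m r).ncard = Nat.card (𝒫 sumZeroSubsets m r) := by
        rw [Nat.card_coe_set_eq, Set.ncard_powerset]
    _ ≤ _ := Nat.card_le_card_of_injective f hf
end

section
/- Fix a finite ground set E of size n. Say a simple rank-4 matroid M on E satisfies the points-lines-planes inequality if W_2(M)^2 ≥ (3(W_1(M) − 1) / (2(W_1(M) − 2))) · W_1(M) · W_3(M), where W_k(M) is the number of rank-k flats of M. Then every simple rank-4 matroid on E satisfies the points-lines-planes inequality if and only if every simple rank-4 matroid N on E with the property that W_3(N) ≥ W_3(N') for all rank-4 matroids N' on E whose truncation to rank 3 equals the truncation of N to rank 3, satisfies the points-lines-planes inequality. -/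
/-- `F` is a flat of rank `k` in `M`: it is a flat and it is spanned by an independent
subset of size `k`. -/
def IsFlatOfRank {α : Type*} (M : Matroid α) (F : Set α) (k : ℕ) : Prop :=
  M.IsFlat F ∧ ∃ I ⊆ F, M.Indep I ∧ I.ncard = k ∧ F ⊆ M.closure I

/-- `W k M`, the `k`-th Whitney number of the second kind: the number of rank-`k` flats
of `M`. -/
noncomputable def whitney {α : Type*} (M : Matroid α) (k : ℕ) : ℕ :=
  Nat.card {F : Set α // IsFlatOfRank M F k}

/-- The points-lines-planes inequality for a (simple, rank-4) matroid `M`: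
`W₂(M)² ≥ (3(W₁(M)-1) / (2(W₁(M)-2))) · W₁(M) · W₃(M)`. -/
def PLPIneq {α : Type*} (M : Matroid α) : Prop :=
  (whitney M 2 : ℝ) ^ 2 ≥
    3 * ((whitney M 1 : ℝ) - 1) / (2 * ((whitney M 1 : ℝ) - 2)) *
      (whitney M 1 : ℝ) * (whitney M 3 : ℝ)

/-!
Given a simple rank-4 matroid `M`, choose among the rank-4 matroids with the same truncation
to rank 3 one, `N`, with the most planes; there are finitely many matroids on a finite set.
Lines and points are spanned by independent sets of size at most 2, and whether `x` lies in the
closure of such a set is decided by independence of a set of size at most 3, so `M` and `N` have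
the same points and lines, and `N` is simple. Since `W₃(M) ≤ W₃(N)` and the
coefficient of `W₃` in the inequality is never negative, the inequality for `N` implies it for `M`.
-/

namespace Matroid

variable {α : Type*}

instance [Finite α] : Finite (Matroid α) :=
  Finite.of_injective (fun M : Matroid α ↦ (M.E, M.Indep)) fun _ _ h ↦ by
    simp only [Prod.mk.injEq] at h
    exact ext_indep h.1 fun I _ ↦ by rw [h.2]

/-- For matroids of rank at least `m`, this says they have the same truncation to rank `m`. -/
def SameTruncation (m : ℕ) (M N : Matroid α) : Prop :=
  ∀ I : Set α, (M.Indep I ∧ I.ncard ≤ m) ↔ (N.Indep I ∧ I.ncard ≤ m)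

namespace SameTruncation

variable {m k : ℕ} {M N P : Matroid α} {I F : Set α}

lemma refl (m : ℕ) (M : Matroid α) : SameTruncation m M M := fun _ ↦ Iff.rfl

lemma symm (h : SameTruncation m M N) : SameTruncation m N M := fun I ↦ (h I).symm

lemma trans (h : SameTruncation m M N) (h' : SameTruncation m N P) : SameTruncation m M P :=
  fun I ↦ (h I).trans (h' I)

lemma indep_iff (h : SameTruncation m M N) (hI : I.ncard ≤ m) : M.Indep I ↔ N.Indep I :=
  ⟨fun hM ↦ ((h I).1 ⟨hM, hI⟩).1, fun hN ↦ ((h I).2 ⟨hN, hI⟩).1⟩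

lemma closure_eq (h : SameTruncation m M N) (hE : M.E = N.E) (hI : M.Indep I)
    (hIm : I.ncard < m) : M.closure I = N.closure I := by
  have hNI : N.Indep I := (h.indep_iff hIm.le).1 hI
  ext x
  have hins : (insert x I).ncard ≤ m := (Set.ncard_insert_le x I).trans hIm
  rw [hI.mem_closure_iff', hNI.mem_closure_iff', hE, h.indep_iff hins]

lemma isFlatOfRank (h : SameTruncation m M N) (hE : M.E = N.E) (hk : k < m)
    (hF : IsFlatOfRank M F k) : IsFlatOfRank N F k := by
  obtain ⟨hFlat, I, hIF, hI, rfl, hFI⟩ := hF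
  have hF_eq : F = N.closure I := by
    rw [← h.closure_eq hE hI hk]
    exact hFI.antisymm ((M.closure_subset_closure hIF).trans_eq hFlat.closure)
  exact ⟨hF_eq ▸ N.isFlat_closure I, I, hIF, (h.indep_iff hk.le).1 hI, rfl, hF_eq.le⟩

lemma whitney_eq (h : SameTruncation m M N) (hE : M.E = N.E) (hk : k < m) :
    whitney M k = whitney N k := by
  unfold whitney
  congr! 3 with F
  exact ⟨h.isFlatOfRank hE hk, h.symm.isFlatOfRank hE.symm hk⟩

lemma indep_pair (h : SameTruncation m M N) (hm : 2 ≤ m) {x y : α} (hxy : M.Indep {x, y}) :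
    N.Indep {x, y} := by
  refine (h.indep_iff (le_trans ?_ hm)).1 hxy
  simpa using Set.ncard_insert_le x {y}

end SameTruncation

end Matroid

open Matroid

-- For `w = 2` the coefficient is `0` because of division by zero.
lemma plp_coeff_nonneg (w : ℕ) : 0 ≤ 3 * ((w : ℝ) - 1) / (2 * ((w : ℝ) - 2)) * w := by
  rcases Nat.lt_or_ge w 3 with hw | hw
  · interval_cases w <;> norm_num
  · have hw' : (3 : ℝ) ≤ w := by exact_mod_cast hw
    exact mul_nonneg (div_nonneg (by linarith) (by linarith)) (by linarith)

lemma PLPIneq.of_whitney_le {α β : Type*} {M : Matroid α} {N : Matroid β}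
    (h₁ : whitney M 1 = whitney N 1) (h₂ : whitney M 2 = whitney N 2)
    (h₃ : whitney M 3 ≤ whitney N 3) (hN : PLPIneq N) : PLPIneq M := by
  unfold PLPIneq at hN ⊢
  rw [h₁, h₂]
  refine le_trans ?_ hN
  gcongr
  exact plp_coeff_nonneg _

/-- The points-lines-planes conjecture holds for all simple rank-4 matroids on a fixed
`n`-element ground set iff it holds for all simple rank-4 matroids `N` whose number of
rank-3 flats is maximal among all rank-4 matroids with the same truncation to rank 3
(the truncation to rank 3 being determined by the independent sets of size at most 3). -/
theorem plp_iff_plp_on_free_erections (n : ℕ) :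
    (∀ M : Matroid (Fin n), M.E = Set.univ → (∀ x y : Fin n, M.Indep {x, y}) →
        (∀ B, M.IsBase B → B.ncard = 4) → PLPIneq M) ↔
    (∀ N : Matroid (Fin n), N.E = Set.univ → (∀ x y : Fin n, N.Indep {x, y}) →
        (∀ B, N.IsBase B → B.ncard = 4) →
        (∀ N' : Matroid (Fin n), N'.E = Set.univ → (∀ B, N'.IsBase B → B.ncard = 4) →
          (∀ I : Set (Fin n), (N'.Indep I ∧ I.ncard ≤ 3) ↔ (N.Indep I ∧ I.ncard ≤ 3)) →
          whitney N' 3 ≤ whitney N 3) →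
        PLPIneq N) := by
  refine ⟨fun h N hE hs hr _ ↦ h N hE hs hr, fun h M hME hMs hMr ↦ ?_⟩
  let erections : Set (Matroid (Fin n)) :=
    {N | N.E = Set.univ ∧ (∀ B, N.IsBase B → B.ncard = 4) ∧ SameTruncation 3 N M}
  obtain ⟨N, ⟨hNE, hNr, hNM⟩, hmax⟩ := erections.exists_max_image (whitney · 3)
    erections.toFinite ⟨M, hME, hMr, .refl 3 M⟩
  have hNs : ∀ x y, N.Indep {x, y} := fun x y ↦ hNM.symm.indep_pair (by norm_num) (hMs x y)
  have hPLP : PLPIneq N :=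
    h N hNE hNs hNr fun N' hE' hr' hN'N ↦ hmax N' ⟨hE', hr', SameTruncation.trans hN'N hNM⟩
  have hE : M.E = N.E := hME.trans hNE.symm
  exact hPLP.of_whitney_le (hNM.symm.whitney_eq hE (by norm_num))
    (hNM.symm.whitney_eq hE (by norm_num)) (hmax M ⟨hME, hMr, .refl 3 M⟩)
end
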